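/- arXiv:2406.16749 — 2 statements merged into one kernel-verified Lean document; each statement's English description precedes it below -/
import Mathlib

section
/- For any arrangement of N hyperplanes in R^R, the number of regions is at most the sum over r from 0 to R of binomial(N, r). -/
/-!
Points with the same sign vector with respect to all hyperplanes form a convex set, so they lie
in one region: it suffices to count the sign vectors realized off the hyperplanes. Remove the
first hyperplane `g = 0`. A sign vector of the other hyperplanes extends in at most two ways,
and in two ways only if its cell meets both sides of `g`; a segment joining them crosses `g = 0`,
so such a sign vector is realized inside the hyperplane `g = 0`, by an arrangement of one
hyperplane fewer in one dimension less. Writing `b(N, d)` for the largest number of sign vectors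
of `N` hyperplanes in dimension `d`, this gives `b(N, d) ≤ b(N - 1, d) + b(N - 1, d - 1)`,
which is Pascal's recursion for `∑_{r ≤ d} (N choose r)`.
-/

open Finset Module

theorem Nat.sum_range_succ_choose_succ (N d : ℕ) :
    ∑ r ∈ range (d + 1), (N + 1).choose r =
      ∑ r ∈ range (d + 1), N.choose r + ∑ r ∈ range d, N.choose r := by
  simp only [sum_range_succ', Nat.choose_succ_succ', sum_add_distrib, Nat.choose_zero_right]
  ring

def splitTails {n : ℕ} (S : Set (Fin (n + 1) → SignType)) : Set (Fin n → SignType) :=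
  {t | Fin.cons 1 t ∈ S ∧ Fin.cons (-1) t ∈ S}

theorem ncard_le_ncard_add_ncard_splitTails {n : ℕ} {S : Set (Fin (n + 1) → SignType)}
    {T : Set (Fin n → SignType)} (hS : ∀ s ∈ S, s 0 ≠ 0) (hT : ∀ s ∈ S, Fin.tail s ∈ T) :
    S.ncard ≤ T.ncard + (splitTails S).ncard := by
  set Tpos : Set (Fin n → SignType) := {t | Fin.cons 1 t ∈ S}
  set Tneg : Set (Fin n → SignType) := {t | Fin.cons (-1) t ∈ S}
  have hsplit : S ⊆ Fin.cons 1 '' Tpos ∪ Fin.cons (-1) '' Tneg := by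
    intro s hs
    have hs0 := hS s hs
    rw [← Fin.cons_self_tail s] at hs ⊢
    cases h : s 0 with
    | zero => exact absurd h hs0
    | neg => exact .inr ⟨Fin.tail s, by rwa [h] at hs, rfl⟩
    | pos => exact .inl ⟨Fin.tail s, by rwa [h] at hs, rfl⟩
  calc S.ncard ≤ Tpos.ncard + Tneg.ncard := by
        refine (Set.ncard_le_ncard hsplit).trans ((Set.ncard_union_le _ _).trans ?_)
        exact add_le_add (Set.ncard_image_le (Set.toFinite _)) (Set.ncard_image_le (Set.toFinite _))
    _ = (Tpos ∪ Tneg).ncard + (Tpos ∩ Tneg).ncard := (Set.ncard_union_add_ncard_inter _ _).symm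
    _ ≤ T.ncard + (Tpos ∩ Tneg).ncard := by
        gcongr
        · exact Set.toFinite _
        rintro t (ht | ht) <;> simpa using hT _ ht

section SignVectors

variable {𝕜 ι V P : Type*} [Field 𝕜] [AddCommGroup V] [Module 𝕜 V] [AddTorsor V P]

def AffineMap.zeroSet (g : P →ᵃ[𝕜] 𝕜) : AffineSubspace 𝕜 P :=
  (⊥ : Submodule 𝕜 𝕜).toAffineSubspace.comap g

theorem AffineMap.mem_zeroSet {g : P →ᵃ[𝕜] 𝕜} {x : P} : x ∈ g.zeroSet ↔ g x = 0 := by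
  simp [AffineMap.zeroSet]

variable [LinearOrder 𝕜]

def signVector (f : ι → P →ᵃ[𝕜] 𝕜) (x : P) : ι → SignType := fun i => SignType.sign (f i x)

-- The sign vectors of the regions of `f` in `A`, i.e. the topes of its oriented matroid.
def topes (f : ι → P →ᵃ[𝕜] 𝕜) (A : Set P) : Set (ι → SignType) :=
  {s | (∀ i, s i ≠ 0) ∧ ∃ x ∈ A, signVector f x = s}

theorem signVector_cons {n : ℕ} (g : P →ᵃ[𝕜] 𝕜) (f : Fin n → P →ᵃ[𝕜] 𝕜) (x : P) :
    signVector (Fin.cons g f : Fin (n + 1) → P →ᵃ[𝕜] 𝕜) x =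
      Fin.cons (SignType.sign (g x)) (signVector f x) := by
  funext i
  cases i using Fin.cases <;> rfl

theorem mem_topes_cons_iff {n : ℕ} {g : P →ᵃ[𝕜] 𝕜} {f : Fin n → P →ᵃ[𝕜] 𝕜} {A : Set P}
    {a : SignType} {t : Fin n → SignType} :
    Fin.cons a t ∈ topes (Fin.cons g f) A ↔
      a ≠ 0 ∧ (∀ i, t i ≠ 0) ∧ ∃ x ∈ A, SignType.sign (g x) = a ∧ signVector f x = t := by
  simp only [topes, Set.mem_ofPred_eq, and_assoc, Fin.forall_fin_succ, Fin.cons_zero,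
    Fin.cons_succ, signVector_cons, Fin.cons_inj]

theorem tail_mem_topes {n : ℕ} {g : P →ᵃ[𝕜] 𝕜} {f : Fin n → P →ᵃ[𝕜] 𝕜} {A : Set P}
    {s : Fin (n + 1) → SignType} (hs : s ∈ topes (Fin.cons g f) A) : Fin.tail s ∈ topes f A := by
  rw [← Fin.cons_self_tail s] at hs
  obtain ⟨-, ht, x, hxA, -, hx⟩ := mem_topes_cons_iff.1 hs
  exact ⟨ht, x, hxA, hx⟩

variable [IsStrictOrderedRing 𝕜]

theorem SignType.convex_sign_preimage (c : SignType) : Convex 𝕜 {t : 𝕜 | SignType.sign t = c} := by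
  cases c with
  | zero => simp only [SignType.zero_eq_zero, sign_eq_zero_iff]; exact convex_singleton 0
  | neg => simp only [SignType.neg_eq_neg_one, sign_eq_neg_one_iff]; exact convex_Iio 0
  | pos => simp only [SignType.pos_eq_one, sign_eq_one_iff]; exact convex_Ioi 0

theorem signVector_lineMap {f : ι → P →ᵃ[𝕜] 𝕜} {x y : P} (hxy : signVector f x = signVector f y)
    {θ : 𝕜} (hθ : θ ∈ Set.Icc (0 : 𝕜) 1) :
    signVector f (AffineMap.lineMap x y θ) = signVector f x := by
  funext i
  simp only [signVector, AffineMap.apply_lineMap]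
  exact (SignType.convex_sign_preimage (𝕜 := 𝕜) _).lineMap_mem rfl (congrFun hxy i).symm hθ

theorem AffineMap.exists_lineMap_eq_zero (g : P →ᵃ[𝕜] 𝕜) {x y : P} (hx : g x < 0) (hy : 0 < g y) :
    ∃ θ ∈ Set.Icc (0 : 𝕜) 1, g (AffineMap.lineMap x y θ) = 0 := by
  have hxy : g x - g y < 0 := by linarith
  refine ⟨g x / (g x - g y), ⟨div_nonneg_of_nonpos hx.le hxy.le, ?_⟩, ?_⟩
  · rw [div_le_one_of_neg hxy]
    linarith
  · have := hxy.ne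
    rw [AffineMap.apply_lineMap, AffineMap.lineMap_apply_ring']
    field_simp
    ring

theorem convex_setOf_signVector_eq (f : ι → V →ᵃ[𝕜] 𝕜) (s : ι → SignType) :
    Convex 𝕜 {x | signVector f x = s} := by
  have hcell : {x | signVector f x = s} = ⋂ i, f i ⁻¹' {t | SignType.sign t = s i} := by
    ext x
    simp [signVector, funext_iff]
  rw [hcell]
  exact convex_iInter fun i => (SignType.convex_sign_preimage (s i)).affine_preimage (f i)

theorem mem_topes_inf_zeroSet_of_mem_splitTails {n : ℕ} {g : P →ᵃ[𝕜] 𝕜}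
    {f : Fin n → P →ᵃ[𝕜] 𝕜} {A : AffineSubspace 𝕜 P} {t : Fin n → SignType}
    (ht : t ∈ splitTails (topes (Fin.cons g f) A)) :
    t ∈ topes f (A ⊓ g.zeroSet : AffineSubspace 𝕜 P) := by
  obtain ⟨-, htne, y, hyA, hgy, hy⟩ := mem_topes_cons_iff.1 ht.1
  obtain ⟨-, -, x, hxA, hgx, hx⟩ := mem_topes_cons_iff.1 ht.2
  obtain ⟨θ, hθ, hz⟩ :=
    g.exists_lineMap_eq_zero (sign_eq_neg_one_iff.1 hgx) (sign_eq_one_iff.1 hgy)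
  refine ⟨htne, AffineMap.lineMap x y θ, ⟨AffineMap.lineMap_mem θ hxA hyA, g.mem_zeroSet.2 hz⟩, ?_⟩
  rw [signVector_lineMap (hx.trans hy.symm) hθ, hx]

variable [FiniteDimensional 𝕜 V]

theorem exists_finrank_lt_and_splitTails_subset_topes {n : ℕ} {g : P →ᵃ[𝕜] 𝕜}
    {f : Fin n → P →ᵃ[𝕜] 𝕜} {A : AffineSubspace 𝕜 P}
    (hne : (splitTails (topes (Fin.cons g f) A)).Nonempty) :
    ∃ A' : AffineSubspace 𝕜 P, finrank 𝕜 A'.direction < finrank 𝕜 A.direction ∧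
      splitTails (topes (Fin.cons g f) A) ⊆ topes f A' := by
  obtain ⟨t, ht⟩ := hne
  refine ⟨A ⊓ g.zeroSet, ?_, fun t' ht' => mem_topes_inf_zeroSet_of_mem_splitTails ht'⟩
  obtain ⟨-, z, hz, -⟩ := mem_topes_inf_zeroSet_of_mem_splitTails ht
  obtain ⟨-, -, y, hyA, hgy, -⟩ := mem_topes_cons_iff.1 ht.1
  have hlt : A ⊓ g.zeroSet < A := SetLike.lt_iff_le_and_exists.2
    ⟨inf_le_left, y, hyA, fun hy => (sign_eq_one_iff.1 hgy).ne' (g.mem_zeroSet.1 hy.2)⟩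
  exact Submodule.finrank_lt_finrank_of_lt (AffineSubspace.direction_lt_of_nonempty hlt ⟨z, hz⟩)

theorem ncard_topes_le {N : ℕ} (f : Fin N → P →ᵃ[𝕜] 𝕜) (A : AffineSubspace 𝕜 P) :
    (topes f A).ncard ≤ ∑ r ∈ range (finrank 𝕜 A.direction + 1), N.choose r := by
  induction N generalizing A with
  | zero =>
    calc (topes f A).ncard ≤ 1 := Set.ncard_le_one_of_subsingleton _
      _ = _ := by simp [sum_range_succ']
  | succ N ih =>
    obtain ⟨g, f, rfl⟩ : ∃ g f', f = Fin.cons g f' :=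
      ⟨f 0, Fin.tail f, (Fin.cons_self_tail f).symm⟩
    have hsplit : (splitTails (topes (Fin.cons g f) A)).ncard ≤
        ∑ r ∈ range (finrank 𝕜 A.direction), N.choose r := by
      rcases (splitTails (topes (Fin.cons g f) A)).eq_empty_or_nonempty with hD | hD
      · simp [hD]
      obtain ⟨A', hA', hDA'⟩ := exists_finrank_lt_and_splitTails_subset_topes hD
      calc _ ≤ (topes f A').ncard := Set.ncard_le_ncard hDA'
        _ ≤ _ := ih f A'
        _ ≤ _ := sum_le_sum_of_subset (range_subset_range.2 hA')
    calc (topes (Fin.cons g f) A).ncard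
        ≤ (topes f A).ncard + (splitTails (topes (Fin.cons g f) A)).ncard :=
          ncard_le_ncard_add_ncard_splitTails (fun s hs => hs.1 0) (fun s => tail_mem_topes)
      _ ≤ _ := add_le_add (ih f A) hsplit
      _ = _ := (Nat.sum_range_succ_choose_succ _ _).symm

theorem ncard_topes_univ_le {N : ℕ} (f : Fin N → P →ᵃ[𝕜] 𝕜) :
    (topes f Set.univ).ncard ≤ ∑ r ∈ range (finrank 𝕜 V + 1), N.choose r := by
  have := ncard_topes_le f ⊤
  rwa [AffineSubspace.direction_top, finrank_top, AffineSubspace.top_coe] at this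

end SignVectors

theorem connectedComponent_eq_of_isPreconnected {X : Type*} [TopologicalSpace X] {Y C : Set X}
    (hC : IsPreconnected C) (hCY : C ⊆ Y) {x y : Y} (hx : (x : X) ∈ C) (hy : (y : X) ∈ C) :
    connectedComponent x = connectedComponent y := by
  obtain ⟨y', hy', hyy'⟩ :=
    connectedComponentIn_eq_image x.2 ▸ hC.subset_connectedComponentIn hx hCY hy
  rw [Subtype.ext hyy'] at hy'
  exact connectedComponent_eq hy'

theorem natCard_connectedComponents_le {X α : Type*} [TopologicalSpace X] {T : Set α}
    (hT : T.Finite) (σ : X → α) (hσ : ∀ x, σ x ∈ T)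
    (h : ∀ x y, σ x = σ y → connectedComponent x = connectedComponent y) :
    Nat.card (ConnectedComponents X) ≤ T.ncard := by
  have : Finite T := hT
  rw [← Nat.card_coe_set_eq]
  refine Nat.card_le_card_of_injective (fun q => ⟨σ q.out, hσ _⟩) fun q q' hqq' => ?_
  rw [← Quotient.out_eq q, ← Quotient.out_eq q']
  exact ConnectedComponents.coe_eq_coe.2 (h _ _ (congrArg Subtype.val hqq'))

section Topology

variable {ι E : Type*} [AddCommGroup E] [Module ℝ E]

theorem natCard_connectedComponents_compl_le [TopologicalSpace E] [IsTopologicalAddGroup E]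
    [ContinuousSMul ℝ E] [Finite ι] (f : ι → E →ᵃ[ℝ] ℝ) :
    Nat.card (ConnectedComponents {x | ∀ i, f i x ≠ 0}) ≤ (topes f Set.univ).ncard := by
  refine natCard_connectedComponents_le (Set.toFinite _) (fun x => signVector f x)
    (fun x => ⟨fun i => sign_ne_zero.2 (x.2 i), x, trivial, rfl⟩) fun x y hxy => ?_
  refine connectedComponent_eq_of_isPreconnected (convex_setOf_signVector_eq f _).isPreconnected
    ?_ rfl hxy.symm
  intro z (hz : signVector f z = signVector f x) i
  exact sign_ne_zero.1 ((congrFun hz i).trans_ne (sign_ne_zero.2 (x.2 i)))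

end Topology

theorem number_of_regions_le_general (N R : ℕ)
    (m : Fin N → (Fin R → ℝ)) (h : Fin N → ℝ) :
    Nat.card (ConnectedComponents
      ↥((⋃ i, {v : Fin R → ℝ | ∑ j, m i j * v j = h i})ᶜ)) ≤
      ∑ r ∈ Finset.range (R + 1), N.choose r := by
  set f : Fin N → (Fin R → ℝ) →ᵃ[ℝ] ℝ := fun i =>
    (dotProductEquiv ℝ (Fin R) (m i)).toAffineMap - AffineMap.const ℝ _ (h i)
  have hY : (⋃ i, {v : Fin R → ℝ | ∑ j, m i j * v j = h i})ᶜ = {x | ∀ i, f i x ≠ 0} := by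
    ext v
    simp [f, sub_eq_zero, dotProduct]
  rw [hY]
  calc _ ≤ (topes f Set.univ).ncard := natCard_connectedComponents_compl_le f
    _ ≤ _ := by simpa using ncard_topes_univ_le f

/-- For any arrangement of `N` hyperplanes in `ℝ^R`, the number of
regions (connected components of the complement of the union of the
hyperplanes) is at most `∑_{r=0}^{R} (N choose r)`. -/
theorem number_of_regions_le (N R : ℕ)
    (m : Fin N → (Fin R → ℝ)) (h : Fin N → ℝ)
    (hm : ∀ i, m i ≠ 0) :
    Nat.card (ConnectedComponents
      ↥((⋃ i, {v : Fin R → ℝ | ∑ j, m i j * v j = h i})ᶜ)) ≤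
      ∑ r ∈ Finset.range (R + 1), N.choose r :=
  number_of_regions_le_general N R m h
end

section
/- Any arrangement in R^R consisting of N families of D parallel hyperplanes partitions R^R into at most sum over r from 0 to R of D^r * binomial(N, r) regions. -/
/-!
Count sign patterns instead of regions: the points of one region lie on the same side of every
hyperplane, and conversely a point set cut out by a sign pattern and avoiding all hyperplanes is
convex, hence connected. Sign patterns are counted by deletion–restriction on the number of
families. Deleting the last family, a pattern `τ` of the others extends in at most
`1 + #{d | τ is realised on the hyperplane d of the last family}` ways, since the last functional
ranges over an interval on the cell of `τ`. Summing over `τ`, the patterns realised on each of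
the `D` last hyperplanes are those of an arrangement in one dimension less, which gives the
recursion `B(N + 1, n + 1) = B(N, n + 1) + D * B(N, n)` for the bound.
-/

open Finset

noncomputable section
open scoped Classical

section Threshold

variable {ι : Type*} (c : ι → ℝ)

def thresholdPattern (t : ℝ) : ι → Bool := fun d => decide (c d < t)

variable {c}

theorem thresholdPattern_mono : Monotone (thresholdPattern c) := fun _ _ ht _ =>
  Bool.le_iff_imp.2 fun h => decide_eq_true ((of_decide_eq_true h).trans_le ht)

theorem thresholdPattern_eq_of_mem_Icc {t₁ t₂ t : ℝ} (ht : t ∈ Set.Icc t₁ t₂)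
    (heq : thresholdPattern c t₁ = thresholdPattern c t₂) :
    thresholdPattern c t = thresholdPattern c t₁ :=
  le_antisymm (heq ▸ thresholdPattern_mono ht.2) (thresholdPattern_mono ht.1)

theorem ordConnected_setOf_thresholdPattern_eq (p : ι → Bool) :
    {t | thresholdPattern c t = p}.OrdConnected :=
  ⟨fun _ h₁ _ h₂ _ ht => (thresholdPattern_eq_of_mem_Icc ht (h₁.trans h₂.symm)).trans h₁⟩

theorem ordConnected_setOf_thresholdPattern_eq_and_notMem_range (p : ι → Bool) :
    {t | thresholdPattern c t = p ∧ t ∉ Set.range c}.OrdConnected := by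
  refine ⟨fun t₁ h₁ t₂ h₂ t ht => ⟨(thresholdPattern_eq_of_mem_Icc ht
    (h₁.1.trans h₂.1.symm)).trans h₁.1, ?_⟩⟩
  rintro ⟨d, rfl⟩
  have hlt₁ : t₁ < c d := ht.1.lt_of_ne fun h => h₁.2 ⟨d, h.symm⟩
  have hlt₂ : c d < t₂ := ht.2.lt_of_ne fun h => h₂.2 ⟨d, h⟩
  have := congrFun (h₁.1.trans h₂.1.symm) d
  simp [thresholdPattern, hlt₁.not_gt, hlt₂] at this

theorem thresholdPattern_apply_eq_of_notMem {I : Set ℝ} (hI : I.OrdConnected) {t₁ t₂ : ℝ}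
    (ht₁ : t₁ ∈ I) (ht₂ : t₂ ∈ I) {d : ι} (hd : c d ∉ I) :
    thresholdPattern c t₁ d = thresholdPattern c t₂ d := by
  have key : ∀ {a b}, a ∈ I → b ∈ I → c d < a → c d < b := fun ha hb hlt =>
    not_le.1 fun hle => hd (hI.out hb ha ⟨hle, hlt.le⟩)
  simp only [thresholdPattern, decide_eq_decide]
  exact ⟨key ht₁ ht₂, key ht₂ ht₁⟩

/-- Along an interval the threshold pattern only changes at thresholds inside the interval, and it
changes monotonically, so the number of thresholds already passed determines it. -/
theorem card_thresholdPatterns_le [Fintype ι] [DecidableEq ι] {I : Set ℝ} (hI : I.OrdConnected) :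
    #{p | p ∈ thresholdPattern c '' I} ≤ #{d | c d ∈ I} + 1 := by
  set B : Finset ι := {d | c d ∈ I}
  let passed : (ι → Bool) → ℕ := fun p => #{d ∈ B | p d}
  have key : ∀ t₁ ∈ I, ∀ t₂ ∈ I, t₁ ≤ t₂ →
      passed (thresholdPattern c t₁) = passed (thresholdPattern c t₂) →
      thresholdPattern c t₁ = thresholdPattern c t₂ := by
    intro t₁ ht₁ t₂ ht₂ hle hpassed
    have hsub : {d ∈ B | thresholdPattern c t₁ d} ⊆ {d ∈ B | thresholdPattern c t₂ d} :=
      monotone_filter_right _ fun d _ => Bool.le_iff_imp.1 (thresholdPattern_mono hle d)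
    have hB := eq_of_subset_of_card_le hsub hpassed.ge
    funext d
    by_cases hd : c d ∈ I
    · have hdB : d ∈ B := by simpa [B] using hd
      simpa [hdB] using congrArg (d ∈ ·) hB
    · exact thresholdPattern_apply_eq_of_notMem hI ht₁ ht₂ hd
  calc #{p | p ∈ thresholdPattern c '' I} ≤ #(range (#B + 1)) := by
        refine card_le_card_of_injOn passed
          (fun p _ => mem_range_succ_iff.2 (card_filter_le _ _)) ?_
        simp only [coe_filter, mem_univ, true_and, Set.ofPred_mem_eq]
        rintro _ ⟨t₁, ht₁, rfl⟩ _ ⟨t₂, ht₂, rfl⟩ hpassed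
        rcases le_total t₁ t₂ with hle | hle
        · exact key t₁ ht₁ t₂ ht₂ hle hpassed
        · exact (key t₂ ht₂ t₁ ht₁ hle hpassed.symm).symm
    _ = #B + 1 := card_range _

end Threshold

section Patterns

variable {V : Type*} [AddCommGroup V] [Module ℝ V] {N D : ℕ}

def signPattern (g : Fin N → V →ₗ[ℝ] ℝ) (h : Fin N → Fin D → ℝ) (v : V) :
    Fin N → Fin D → Bool :=
  fun i => thresholdPattern (h i) (g i v)

def patternsOn (g : Fin N → V →ₗ[ℝ] ℝ) (h : Fin N → Fin D → ℝ) (S : Set V) :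
    Finset (Fin N → Fin D → Bool) :=
  {s | s ∈ signPattern g h '' S}

@[simp]
theorem mem_patternsOn {g : Fin N → V →ₗ[ℝ] ℝ} {h : Fin N → Fin D → ℝ} {S : Set V}
    {s : Fin N → Fin D → Bool} : s ∈ patternsOn g h S ↔ ∃ v ∈ S, signPattern g h v = s := by
  simp [patternsOn]

theorem patternsOn_mono {g : Fin N → V →ₗ[ℝ] ℝ} {h : Fin N → Fin D → ℝ} {S T : Set V}
    (hST : S ⊆ T) : patternsOn g h S ⊆ patternsOn g h T := fun _ hs => by
  obtain ⟨v, hv, rfl⟩ := mem_patternsOn.1 hs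
  exact mem_patternsOn.2 ⟨v, hST hv, rfl⟩

theorem convex_setOf_signPattern_eq (g : Fin N → V →ₗ[ℝ] ℝ) (h : Fin N → Fin D → ℝ)
    (s : Fin N → Fin D → Bool) : Convex ℝ {v | signPattern g h v = s} := by
  have : {v | signPattern g h v = s} = ⋂ i, g i ⁻¹' {t | thresholdPattern (h i) t = s i} := by
    ext v
    simp [signPattern, funext_iff]
  rw [this]
  exact convex_iInter fun i => (ordConnected_setOf_thresholdPattern_eq _).convex.linear_preimage _

theorem convex_setOf_signPattern_eq_and_notMem (g : Fin N → V →ₗ[ℝ] ℝ) (h : Fin N → Fin D → ℝ)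
    (s : Fin N → Fin D → Bool) :
    Convex ℝ {v | signPattern g h v = s ∧ ∀ i, g i v ∉ Set.range (h i)} := by
  have : {v | signPattern g h v = s ∧ ∀ i, g i v ∉ Set.range (h i)} =
      ⋂ i, g i ⁻¹' {t | thresholdPattern (h i) t = s i ∧ t ∉ Set.range (h i)} := by
    ext v
    simp [signPattern, funext_iff, forall_and]
  rw [this]
  exact convex_iInter fun i =>
    (ordConnected_setOf_thresholdPattern_eq_and_notMem_range _).convex.linear_preimage _

/-- An extension of `τ` is fixed by the value of the last functional on the convex cell of `τ`,
so it is a threshold pattern along an interval. -/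
theorem card_fiber_init_le (g : Fin (N + 1) → V →ₗ[ℝ] ℝ) (h : Fin (N + 1) → Fin D → ℝ)
    (τ : Fin N → Fin D → Bool) :
    #{s ∈ patternsOn g h Set.univ | Fin.init s = τ} ≤
      #{d | τ ∈ patternsOn (Fin.init g) (Fin.init h)
        {v | g (Fin.last N) v = h (Fin.last N) d}} + 1 := by
  let C : Set V := {v | signPattern (Fin.init g) (Fin.init h) v = τ}
  let I : Set ℝ := g (Fin.last N) '' C
  have hI : I.OrdConnected :=
    ((convex_setOf_signPattern_eq _ _ τ).linear_image _).ordConnected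
  calc #{s ∈ patternsOn g h Set.univ | Fin.init s = τ}
      ≤ #{p | p ∈ thresholdPattern (h (Fin.last N)) '' I} := by
        refine card_le_card_of_injOn (fun s => s (Fin.last N)) ?_ ?_
        · simp only [coe_filter, mem_patternsOn, Set.mem_univ, true_and]
          rintro _ ⟨⟨v, rfl⟩, hv⟩
          exact ⟨mem_univ _, _, ⟨v, hv, rfl⟩, rfl⟩
        · rintro s₁ hs₁ s₂ hs₂ hlast
          simp only [coe_filter, Set.mem_ofPred_eq] at hs₁ hs₂
          rw [← Fin.snoc_init_self s₁, ← Fin.snoc_init_self s₂, hs₁.2, hs₂.2]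
          exact congrArg _ hlast
    _ ≤ #{d | h (Fin.last N) d ∈ I} + 1 := card_thresholdPatterns_le hI
    _ = _ := by
        congr 2
        ext d
        simp [I, C, and_comm]

theorem card_patternsOn_le_of_last_eq_zero {g : Fin (N + 1) → V →ₗ[ℝ] ℝ}
    (h : Fin (N + 1) → Fin D → ℝ) (hg : g (Fin.last N) = 0) :
    #(patternsOn g h Set.univ) ≤ #(patternsOn (Fin.init g) (Fin.init h) Set.univ) := by
  refine card_le_card_of_injOn Fin.init ?_ ?_
  · intro s hs
    obtain ⟨v, -, rfl⟩ := mem_patternsOn.1 hs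
    exact mem_patternsOn.2 ⟨v, trivial, rfl⟩
  · intro s₁ hs₁ s₂ hs₂ hinit
    obtain ⟨v₁, -, rfl⟩ := mem_patternsOn.1 hs₁
    obtain ⟨v₂, -, rfl⟩ := mem_patternsOn.1 hs₂
    rw [← Fin.snoc_init_self (signPattern g h v₁), ← Fin.snoc_init_self (signPattern g h v₂),
      hinit]
    simp [signPattern, hg]

theorem card_patternsOn_le_add_sum (g : Fin (N + 1) → V →ₗ[ℝ] ℝ) (h : Fin (N + 1) → Fin D → ℝ) :
    #(patternsOn g h Set.univ) ≤ #(patternsOn (Fin.init g) (Fin.init h) Set.univ) +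
      ∑ d, #(patternsOn (Fin.init g) (Fin.init h) {v | g (Fin.last N) v = h (Fin.last N) d}) := by
  set P := patternsOn (Fin.init g) (Fin.init h) Set.univ
  set Q := fun d => patternsOn (Fin.init g) (Fin.init h) {v | g (Fin.last N) v = h (Fin.last N) d}
  have hmaps : Set.MapsTo (Fin.init (n := N) (α := fun _ => Fin D → Bool))
      (patternsOn g h Set.univ : Set _) (P : Set _) := fun s hs => by
    obtain ⟨v, -, rfl⟩ := mem_patternsOn.1 hs
    exact mem_patternsOn.2 ⟨v, trivial, rfl⟩
  have hcount : ∑ τ ∈ P, #{d | τ ∈ Q d} = ∑ d, #(Q d) := by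
    have hQP : ∀ d, {τ ∈ P | τ ∈ Q d} = Q d := fun d => by
      rw [filter_mem_eq_inter, inter_eq_right]
      exact patternsOn_mono (Set.subset_univ _)
    simpa only [bipartiteAbove, bipartiteBelow, hQP] using
      sum_card_bipartiteAbove_eq_sum_card_bipartiteBelow (fun τ d => τ ∈ Q d) (s := P) (t := univ)
  calc #(patternsOn g h Set.univ) = ∑ τ ∈ P, #{s ∈ patternsOn g h Set.univ | Fin.init s = τ} :=
        card_eq_sum_card_fiberwise hmaps
    _ ≤ ∑ τ ∈ P, (#{d | τ ∈ Q d} + 1) := sum_le_sum fun τ _ => card_fiber_init_le g h τ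
    _ = #P + ∑ d, #(Q d) := by rw [sum_add_distrib, hcount, card_eq_sum_ones, add_comm]

theorem card_patternsOn_hyperplane_le (g : Fin N → V →ₗ[ℝ] ℝ) (h : Fin N → Fin D → ℝ)
    (f : V →ₗ[ℝ] ℝ) (v₀ : V) :
    #(patternsOn g h {v | f v = f v₀}) ≤
      #(patternsOn (fun i => (g i).domRestrict (LinearMap.ker f)) (fun i d => h i d - g i v₀)
        Set.univ) := by
  refine card_le_card fun s hs => ?_
  obtain ⟨v, hv, rfl⟩ := mem_patternsOn.1 hs
  refine mem_patternsOn.2 ⟨⟨v - v₀, by simpa [sub_eq_zero] using hv⟩, trivial, ?_⟩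
  funext i d
  simp [signPattern, thresholdPattern]

end Patterns

def regionBound (D N n : ℕ) : ℕ := ∑ r ∈ range (n + 1), D ^ r * N.choose r

theorem regionBound_zero_left (D n : ℕ) : regionBound D 0 n = 1 := by
  simp [regionBound, sum_range_succ']

theorem regionBound_le_succ (D N n : ℕ) : regionBound D N n ≤ regionBound D (N + 1) n := by
  unfold regionBound
  gcongr
  exact N.le_succ

theorem regionBound_succ_succ (D N n : ℕ) :
    regionBound D (N + 1) (n + 1) = regionBound D N (n + 1) + D * regionBound D N n := by
  simp only [regionBound, sum_range_succ' _ (n + 1), Nat.choose_succ_succ', mul_add,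
    sum_add_distrib, pow_succ', mul_assoc, ← mul_sum, Nat.choose_zero_right]
  ring

theorem card_patternsOn_univ_le {N D : ℕ} {V : Type*} [AddCommGroup V] [Module ℝ V]
    [FiniteDimensional ℝ V] (g : Fin N → V →ₗ[ℝ] ℝ) (h : Fin N → Fin D → ℝ) :
    #(patternsOn g h Set.univ) ≤ regionBound D N (Module.finrank ℝ V) := by
  induction N generalizing V with
  | zero =>
    rw [regionBound_zero_left]
    exact (card_le_univ _).trans (by simp)
  | succ N ih =>
    by_cases hg : g (Fin.last N) = 0
    · exact (card_patternsOn_le_of_last_eq_zero h hg).trans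
        ((ih _ _).trans (regionBound_le_succ _ _ _))
    choose v₀ hv₀ using fun d => LinearMap.surjective hg (h (Fin.last N) d)
    have hhyperplane : ∀ d, #(patternsOn (Fin.init g) (Fin.init h)
        {v | g (Fin.last N) v = h (Fin.last N) d}) ≤
          regionBound D N (Module.finrank ℝ (LinearMap.ker (g (Fin.last N)))) := fun d => by
      rw [← hv₀ d]
      exact (card_patternsOn_hyperplane_le _ _ _ _).trans (ih _ _)
    calc #(patternsOn g h Set.univ)
        ≤ #(patternsOn (Fin.init g) (Fin.init h) Set.univ) +
          ∑ d, #(patternsOn (Fin.init g) (Fin.init h) {v | g (Fin.last N) v = h (Fin.last N) d}) :=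
          card_patternsOn_le_add_sum g h
      _ ≤ regionBound D N (Module.finrank ℝ V) +
          ∑ _ : Fin D, regionBound D N (Module.finrank ℝ (LinearMap.ker (g (Fin.last N)))) :=
          add_le_add (ih _ _) (sum_le_sum fun d _ => hhyperplane d)
      _ = regionBound D (N + 1) (Module.finrank ℝ V) := by
          rw [← Module.Dual.finrank_ker_add_one_of_ne_zero hg, regionBound_succ_succ, sum_const,
            card_univ, Fintype.card_fin, smul_eq_mul]

theorem card_connectedComponents_le_card_range {X Y : Type*} [TopologicalSpace X] [Finite Y]
    (f : X → Y) (hf : ∀ y, IsPreconnected (f ⁻¹' {y})) :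
    Nat.card (ConnectedComponents X) ≤ Nat.card (Set.range f) := by
  refine Nat.card_le_card_of_surjective (fun y => ConnectedComponents.mk (Set.rangeSplitting f y))
    fun c => ?_
  obtain ⟨x, rfl⟩ := ConnectedComponents.surjective_coe c
  refine ⟨⟨f x, x, rfl⟩, ConnectedComponents.coe_eq_coe'.2 ?_⟩
  exact (hf (f x)).subset_connectedComponent rfl (Set.apply_rangeSplitting f _)

theorem card_connectedComponents_compl_hyperplanes_le {N D : ℕ} {V : Type*} [AddCommGroup V]
    [Module ℝ V] [FiniteDimensional ℝ V] [TopologicalSpace V] [IsTopologicalAddGroup V]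
    [ContinuousSMul ℝ V] (g : Fin N → V →ₗ[ℝ] ℝ) (h : Fin N → Fin D → ℝ) :
    Nat.card (ConnectedComponents {v : V | ∀ i, g i v ∉ Set.range (h i)}) ≤
      regionBound D N (Module.finrank ℝ V) := by
  set X := {v : V | ∀ i, g i v ∉ Set.range (h i)}
  have hfiber : ∀ s, IsPreconnected ((fun x : X => signPattern g h x) ⁻¹' {s}) := fun s => by
    rw [← Topology.IsInducing.subtypeVal.isPreconnected_image]
    convert (convex_setOf_signPattern_eq_and_notMem g h s).isPreconnected using 1
    ext v
    simp [X, and_comm]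
  calc Nat.card (ConnectedComponents X)
      ≤ Nat.card (Set.range fun x : X => signPattern g h x) :=
        card_connectedComponents_le_card_range _ hfiber
    _ ≤ #(patternsOn g h Set.univ) := by
        rw [Nat.card_coe_set_eq, ← Set.ncard_coe_finset]
        refine Set.ncard_le_ncard ?_ (finite_toSet _)
        rintro _ ⟨x, rfl⟩
        simp
    _ ≤ regionBound D N (Module.finrank ℝ V) := card_patternsOn_univ_le g h

end

theorem parallel_families_regions_le_general (N R D : ℕ)
    (m : Fin N → (Fin R → ℝ)) (h : Fin N → Fin D → ℝ) :
    Nat.card (ConnectedComponents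
      ↥((⋃ i, ⋃ d, {v : Fin R → ℝ | ∑ j, m i j * v j = h i d})ᶜ)) ≤
      ∑ r ∈ Finset.range (R + 1), D ^ r * N.choose r := by
  have hregions : (⋃ i, ⋃ d, {v : Fin R → ℝ | ∑ j, m i j * v j = h i d})ᶜ =
      {v | ∀ i, dotProductBilin ℝ ℝ (m i) v ∉ Set.range (h i)} := by
    ext v
    simp [dotProduct, eq_comm]
  rw [hregions]
  convert card_connectedComponents_compl_hyperplanes_le (fun i => dotProductBilin ℝ ℝ (m i)) h
  rw [Module.finrank_fin_fun, regionBound]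

/-- Any arrangement in `ℝ^R` consisting of `N` families of `D`
parallel hyperplanes partitions `ℝ^R` into at most
`∑_{r=0}^{R} D^r * (N choose r)` regions.

Family `i` has normal `m i ≠ 0` and `D` distinct offsets `h i d`; a region is a
connected component of the complement of the union of all `N * D` hyperplanes. -/
theorem parallel_families_regions_le (N R D : ℕ)
    (m : Fin N → (Fin R → ℝ)) (h : Fin N → Fin D → ℝ)
    (hm : ∀ i, m i ≠ 0)
    (hh : ∀ i, Function.Injective (h i)) :
    Nat.card (ConnectedComponents
      ↥((⋃ i, ⋃ d, {v : Fin R → ℝ | ∑ j, m i j * v j = h i d})ᶜ)) ≤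
      ∑ r ∈ Finset.range (R + 1), D ^ r * N.choose r :=
  parallel_families_regions_le_general N R D m h
end
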